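/- Let n ≥ 1 with n ∈ N_B and n+1 ∈ N_B, and let α_1,…,α_n ∈ {0,1,…,s−1} with α_n ≠ 0. Then the quasi-nega-s values of the following two digit sequences are equal: the sequence with digits α_1,…,α_{n−1}, s−1−α_n at position n, s−1 at position n+1, and β_k at every position k ≥ n+2; and the sequence with digits α_1,…,α_{n−1}, s−α_n at position n, 0 at position n+1, and γ_k at every position k ≥ n+2. -/

import Mathlib

/-!
Subtract the second digit sequence `b` from the first one `a` termwise. The signed
differences `ε_k (a_k - b_k)` vanish for `k < n`, equal `1` at `k = n` (as `n ∈ N_B`), and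
equal `-(s - 1)` for every `k > n`, because `ε_k` changes sign exactly where the tails `β`
and `γ` trade `s - 1` for `0`. The difference of the two values is therefore
`s⁻ⁿ - ∑_{k > n} (s - 1) s⁻ᵏ = 0`.
-/

open scoped Classical BigOperators

/-- Sign of the `n`-th term: `-1` if `n ∈ N_B`, `+1` otherwise. -/
noncomputable def eps (B : Set ℕ+) (n : ℕ+) : ℝ := if n ∈ B then -1 else 1

/-- The quasi-nega-s value of a digit sequence `α`:
`S(α) = Σ_{n≥1} ε_n α_n / s^n`. -/
noncomputable def qnsVal (s : ℕ) (B : Set ℕ+) (α : ℕ+ → ℕ) : ℝ :=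
  ∑' n : ℕ+, eps B n * (α n : ℝ) / (s : ℝ) ^ (n : ℕ)

noncomputable def betaTailDigits (s : ℕ) (B : Set ℕ+) (n : ℕ+) (α : ℕ+ → ℕ) : ℕ+ → ℕ :=
  fun k => if k < n then α k else if k = n then s - 1 - α n
    else if k = n + 1 then s - 1
    else if k ∈ B then s - 1 else 0

noncomputable def gammaTailDigits (s : ℕ) (B : Set ℕ+) (n : ℕ+) (α : ℕ+ → ℕ) : ℕ+ → ℕ :=
  fun k => if k < n then α k else if k = n then s - α n
    else if k = n + 1 then 0
    else if k ∉ B then s - 1 else 0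

lemma abs_eps (B : Set ℕ+) (k : ℕ+) : |eps B k| = 1 := by
  unfold eps; split_ifs <;> simp

lemma summable_eps_mul_div_pow {s : ℕ} (hs : 1 < s) (B : Set ℕ+) {d : ℕ+ → ℕ} {C : ℕ}
    (hd : ∀ k, d k ≤ C) :
    Summable fun k : ℕ+ => eps B k * (d k : ℝ) / (s : ℝ) ^ (k : ℕ) := by
  have hs' : (1 : ℝ) < s := by exact_mod_cast hs
  have hgeom : Summable fun k : ℕ+ => (C : ℝ) * ((s : ℝ)⁻¹) ^ (k : ℕ) :=
    summable_pnat_iff_summable_nat.mpr <|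
      (summable_geometric_of_lt_one (by positivity) (inv_lt_one_of_one_lt₀ hs')).mul_left _
  refine hgeom.of_norm_bounded fun k => ?_
  rw [Real.norm_eq_abs, abs_div, abs_mul, abs_eps, one_mul, Nat.abs_cast, abs_pow,
    abs_of_pos (by positivity), div_eq_mul_inv, ← inv_pow]
  gcongr
  exact_mod_cast hd k

lemma qnsVal_sub_qnsVal {s : ℕ} (hs : 1 < s) (B : Set ℕ+) {a b : ℕ+ → ℕ} {C : ℕ}
    (ha : ∀ k, a k ≤ C) (hb : ∀ k, b k ≤ C) :
    qnsVal s B a - qnsVal s B b =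
      ∑' k : ℕ+, eps B k * ((a k : ℝ) - b k) / (s : ℝ) ^ (k : ℕ) := by
  rw [qnsVal, qnsVal, ← (summable_eps_mul_div_pow hs B ha).tsum_sub
    (summable_eps_mul_div_pow hs B hb)]
  congr 1 with k
  ring

lemma hasSum_ite_lt_sub_one_div_pow {s : ℝ} (hs : 1 < s) (n : ℕ+) :
    HasSum (fun k : ℕ+ => if n < k then (s - 1) / s ^ (k : ℕ) else 0) (1 / s ^ (n : ℕ)) := by
  set f : ℕ → ℝ := fun m => if (n : ℕ) < m then (s - 1) / s ^ m else 0
  have hs0 : s ≠ 0 := by positivity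
  have hhead : ∑ m ∈ Finset.range (n + 1), f m = 0 :=
    Finset.sum_eq_zero fun m hm => if_neg (by rw [Finset.mem_range] at hm; omega)
  have htail : ∀ m, f (m + (n + 1)) = (s - 1) / s ^ ((n : ℕ) + 1) * s⁻¹ ^ m := fun m => by
    rw [show f (m + (n + 1)) = _ from if_pos (by omega), inv_pow, pow_add]
    field_simp
  have hsum : (s - 1) / s ^ ((n : ℕ) + 1) * (1 - s⁻¹)⁻¹ = 1 / s ^ (n : ℕ) := by
    have : s - 1 ≠ 0 := by linarith
    field_simp
    ring
  have hgeom := (hasSum_geometric_of_lt_one (by positivity) (inv_lt_one_of_one_lt₀ hs)).mul_left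
    ((s - 1) / s ^ ((n : ℕ) + 1))
  rw [hsum, ← funext htail] at hgeom
  have hnat := (hasSum_nat_add_iff' (n + 1)).mp (by rwa [hhead, sub_zero])
  have hzero : f 0 = 0 := if_neg (by omega)
  exact hasSum_pnat_iff (f := f) |>.mpr (by rwa [hzero, add_zero])

section TailDigits

variable {s : ℕ} {B : Set ℕ+} {n : ℕ+} {α : ℕ+ → ℕ}

lemma betaTailDigits_lt (hα : ∀ k, α k < s) (k : ℕ+) : betaTailDigits s B n α k < s := by
  have := hα k
  unfold betaTailDigits
  split_ifs <;> omega

lemma gammaTailDigits_lt (hα : ∀ k, α k < s) (hαn : α n ≠ 0) (k : ℕ+) :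
    gammaTailDigits s B n α k < s := by
  have := hα k
  unfold gammaTailDigits
  split_ifs <;> omega

lemma eps_mul_betaTailDigits_sub_gammaTailDigits (hn : n ∈ B) (hn1 : n + 1 ∈ B)
    (hαn : α n ≠ 0) (hαs : α n < s) (k : ℕ+) :
    eps B k * ((betaTailDigits s B n α k : ℝ) - gammaTailDigits s B n α k) =
      if k = n then 1 else if n < k then -((s : ℝ) - 1) else 0 := by
  have hpred : ((s - 1 : ℕ) : ℝ) = s - 1 := by rw [Nat.cast_sub (by omega), Nat.cast_one]
  have hcarry : ((s - α n : ℕ) : ℝ) = (s - 1 - α n : ℕ) + 1 := by norm_cast; omega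
  rcases lt_trichotomy k n with hk | rfl | hk
  · simp [betaTailDigits, gammaTailDigits, hk, hk.ne, hk.not_gt]
  · simp [betaTailDigits, gammaTailDigits, eps, hn, hcarry]
  · by_cases hk1 : k = n + 1
    · subst hk1
      simp [betaTailDigits, gammaTailDigits, eps, hk.ne', hk.not_gt, hn1, hpred]
    · by_cases hB : k ∈ B <;>
        simp [betaTailDigits, gammaTailDigits, eps, hk, hk.ne', hk.not_gt, hk1, hB, hpred]

end TailDigits

theorem quasiNegaS_two_reps_mem_mem (s : ℕ) (hs : 2 ≤ s) (B : Set ℕ+)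
    (n : ℕ+) (hn : n ∈ B) (hn1 : n + 1 ∈ B)
    (α : ℕ+ → ℕ) (hα : ∀ k, α k < s) (hαn : α n ≠ 0) :
    qnsVal s B (fun k =>
        if k < n then α k else if k = n then s - 1 - α n
        else if k = n + 1 then s - 1
        else if k ∈ B then s - 1 else 0)
      = qnsVal s B (fun k =>
        if k < n then α k else if k = n then s - α n
        else if k = n + 1 then 0
        else if k ∉ B then s - 1 else 0) := by
  change qnsVal s B (betaTailDigits s B n α) = qnsVal s B (gammaTailDigits s B n α)
  rw [← sub_eq_zero, qnsVal_sub_qnsVal hs B (fun k => (betaTailDigits_lt hα k).le)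
    (fun k => (gammaTailDigits_lt hα hαn k).le)]
  have hcancel := (hasSum_ite_eq n (1 / (s : ℝ) ^ (n : ℕ))).sub
    (hasSum_ite_lt_sub_one_div_pow (Nat.one_lt_cast.mpr hs) n)
  rw [sub_self] at hcancel
  refine (tsum_congr fun k => ?_).trans hcancel.tsum_eq
  rw [eps_mul_betaTailDigits_sub_gammaTailDigits hn hn1 hαn (hα n)]
  by_cases hkn : k = n
  · subst hkn
    simp
  · simp only [hkn, if_false]
    split_ifs <;> ring
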